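/- Let R be a ring. If a Gorenstein injective R-module M has finite injective dimension, then M is injective. -/

import Mathlib

open CategoryTheory Opposite

universe u

variable {R : Type u} [Ring R]

/-- A cochain complex of modules is totally acyclic (for injectives) if all its terms are
injective, it is exact, and applying `Hom(J, -)` gives an exact complex for every
injective module `J`. -/
def IsInjTotallyAcyclic {R : Type u} [Ring R] (I : CochainComplex (ModuleCat.{u} R) ℤ) : Prop :=
  (∀ i, Injective (I.X i)) ∧ (∀ i, I.ExactAt i) ∧
    (∀ J : ModuleCat.{u} R, Injective J → ∀ i,
      ((((preadditiveCoyoneda.obj (op J)).mapHomologicalComplex _).obj I).ExactAt i))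

/-- A module is Gorenstein injective if it is a kernel (cosyzygy) in a totally acyclic
complex of injectives. -/
def IsGorensteinInjective {R : Type u} [Ring R] (M : ModuleCat.{u} R) : Prop :=
  ∃ I : CochainComplex (ModuleCat.{u} R) ℤ, IsInjTotallyAcyclic I ∧ Nonempty (M ≅ I.cycles 0)

/-- `M` has injective dimension at most `n`: it admits an injective coresolution
vanishing in degrees `> n`. -/
def HasInjDimLE (M : ModuleCat.{u} R) (n : ℕ) : Prop :=
  ∃ (I : CochainComplex (ModuleCat.{u} R) ℕ)
    (ι : (CochainComplex.single₀ (ModuleCat.{u} R)).obj M ⟶ I),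
      QuasiIso ι ∧ (∀ i, Injective (I.X i)) ∧ (∀ i, n < i → Limits.IsZero (I.X i))

/-!
Let `I` be a totally acyclic complex with `M ≅ Z⁰(I)`. The class of objects `L` for which
`Hom(L, I)` is acyclic contains the injectives and is closed under kernels of epimorphisms
between its members (extend along the monomorphism into the injective terms of `I`, then
correct by a lift coming from the quotient). An injective coresolution of length `n`
exhibits `M` as an iterated such kernel, so `Hom(M, I)` is acyclic. Lifting
`M ≅ Z⁰(I) ⊆ I⁰` through `d : I⁻¹ ⟶ I⁰` then makes `M` a retract of the injective `I⁻¹`.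
-/

open Limits HomologicalComplex

namespace HomologicalComplex

variable {C : Type*} [Category C] [Abelian C] {ι : Type*} {c : ComplexShape ι}

lemma ExactAt.epi_toCycles {K : HomologicalComplex C c} {i j : ι} (h : K.ExactAt j)
    (hij : c.prev j = i) : Epi (K.toCycles i j) := by
  subst hij
  have hsc : K.toCycles (c.prev j) j = (K.sc j).toCycles := by
    refine (cancel_mono (K.iCycles j)).1 ?_
    rw [toCycles_i]
    exact (K.sc j).toCycles_i.symm
  rw [hsc]
  exact ((exactAt_iff K j).1 h).epi_toCycles

lemma shortExact_iCycles_toCycles (K : HomologicalComplex C c) {i j : ι} (hij : c.Rel i j)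
    (h : K.ExactAt j) :
    (ShortComplex.mk (K.iCycles i) (K.toCycles i j) (by
      rw [← cancel_mono (K.iCycles j), Category.assoc, toCycles_i, zero_comp, iCycles_d])).ShortExact
    where
  exact := by
    refine ShortComplex.exact_of_f_is_kernel _ (KernelFork.IsLimit.ofι' _ _ fun k hk => ?_)
    have hkd : k ≫ K.d i j = 0 := by simpa using hk =≫ K.iCycles j
    exact ⟨K.liftCycles' k j hij hkd, by simp⟩
  epi_g := h.epi_toCycles (c.prev_eq' hij)

end HomologicalComplex

namespace CochainComplex

variable {C : Type*} [Category C]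

section Preadditive

variable [Preadditive C]

/-- `Hom(L, I)` is acyclic, written out: every cocycle `L ⟶ I.X (j + 1)` is a coboundary. -/
def homAcyclic (I : CochainComplex C ℤ) : ObjectProperty C := fun L =>
  ∀ (j : ℤ) (g : L ⟶ I.X (j + 1)), g ≫ I.d (j + 1) (j + 1 + 1) = 0 →
    ∃ w : L ⟶ I.X j, w ≫ I.d j (j + 1) = g

instance (I : CochainComplex C ℤ) : (homAcyclic I).IsClosedUnderIsomorphisms where
  of_iso e hL j g hg := by
    obtain ⟨w, hw⟩ := hL j (e.hom ≫ g) (by rw [Category.assoc, hg, comp_zero])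
    exact ⟨e.inv ≫ w, by rw [Category.assoc, hw, Iso.inv_hom_id_assoc]⟩

lemma homAcyclic_of_exactAt {I : CochainComplex C ℤ} {L : C}
    (h : ∀ i, (((preadditiveCoyoneda.obj (op L)).mapHomologicalComplex _).obj I).ExactAt i) :
    homAcyclic I L := by
  intro j g hg
  have hex := h (j + 1)
  rw [exactAt_iff' _ j (j + 1) (j + 1 + 1) (by simp) (by simp), ShortComplex.ab_exact_iff] at hex
  exact hex g hg

end Preadditive

section Abelian

variable [Abelian C]

lemma homAcyclic_X₁_of_shortExact {I : CochainComplex C ℤ} (hI : ∀ i, Injective (I.X i))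
    {S : ShortComplex C} (hS : S.ShortExact) (h₂ : homAcyclic I S.X₂) (h₃ : homAcyclic I S.X₃) :
    homAcyclic I S.X₁ := by
  intro j g hg
  have := hS.mono_f
  have := hS.epi_g
  have := hI (j + 1)
  set g' : S.X₂ ⟶ I.X (j + 1) := Injective.factorThru g S.f
  have hfg' : S.f ≫ g' = g := Injective.comp_factorThru _ _
  obtain ⟨u, hu⟩ := hS.exact.desc' (g' ≫ I.d (j + 1) (j + 1 + 1)) (by
    rw [← Category.assoc, hfg', hg])
  have hud : u ≫ I.d (j + 1 + 1) (j + 1 + 1 + 1) = 0 := by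
    rw [← cancel_epi S.g, ← Category.assoc, hu, Category.assoc, I.d_comp_d, comp_zero,
      comp_zero]
  obtain ⟨v, hv⟩ := h₃ (j + 1) u hud
  obtain ⟨w, hw⟩ := h₂ j (g' - S.g ≫ v) (by
    rw [Preadditive.sub_comp, Category.assoc, hv, hu, sub_self])
  refine ⟨S.f ≫ w, ?_⟩
  rw [Category.assoc, hw, Preadditive.comp_sub, hfg', S.zero_assoc, zero_comp, sub_zero]

lemma injective_of_homAcyclic_of_iso_cycles {I : CochainComplex C ℤ} {M : C} {j k : ℤ}
    (hjk : j + 1 = k) [Injective (I.X j)] (hM : homAcyclic I M) (e : M ≅ I.cycles k) :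
    Injective M := by
  subst hjk
  obtain ⟨w, hw⟩ := hM j (e.hom ≫ I.iCycles (j + 1)) (by simp)
  refine Retract.injective (Y := I.X j) ⟨w, I.toCycles j (j + 1) ≫ e.inv, ?_⟩
  rw [← cancel_mono e.hom, ← cancel_mono (I.iCycles (j + 1))]
  simp [hw]

lemma prop_cycles_of_isZero_X (P : ObjectProperty C) [P.IsClosedUnderIsomorphisms]
    (hP : ∀ S : ShortComplex C, S.ShortExact → P S.X₂ → P S.X₃ → P S.X₁)
    {K : CochainComplex C ℕ} (hK : ∀ i, P (K.X i)) (n : ℕ) {m : ℕ}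
    (hex : ∀ j, m < j → K.ExactAt j) (hzero : ∀ i, m + n < i → IsZero (K.X i)) :
    P (K.cycles m) := by
  induction n generalizing m with
  | zero =>
    have hd : K.d m (m + 1) = 0 := (hzero (m + 1) (by omega)).eq_of_tgt _ _
    exact P.prop_of_iso (K.iCyclesIso m (m + 1) (by simp) hd).symm (hK m)
  | succ n ih =>
    exact hP _ (K.shortExact_iCycles_toCycles (by simp) (hex (m + 1) (by omega))) (hK m)
      (ih (fun j hj => hex j (by omega)) (fun i hi => hzero i (by omega)))

end Abelian

end CochainComplex

namespace CategoryTheory.InjectiveResolution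

variable {C : Type*} [Category C] [Abelian C]

lemma prop_of_isZero_cocomplex_X (P : ObjectProperty C) [P.IsClosedUnderIsomorphisms]
    (hinj : ∀ J, Injective J → P J)
    (hP : ∀ S : ShortComplex C, S.ShortExact → P S.X₂ → P S.X₃ → P S.X₁)
    {Z : C} (I : InjectiveResolution Z) {n : ℕ} (hzero : ∀ i, n < i → IsZero (I.cocomplex.X i)) :
    P Z := by
  have hcycles := CochainComplex.prop_cycles_of_isZero_X P hP (fun i => hinj _ (I.injective i)) n
    (m := 0) (fun j hj => by simpa [Nat.sub_add_cancel hj] using I.cocomplex_exactAt_succ (j - 1))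
    (by simpa using hzero)
  exact P.prop_of_iso
    (IsLimit.conePointUniqueUpToIso (I.cocomplex.cyclesIsKernel 0 1 (by simp)) I.isLimitKernelFork)
    hcycles

end CategoryTheory.InjectiveResolution

/-- A Gorenstein injective module of finite injective dimension is injective. -/
theorem injective_of_gorensteinInjective_of_finite_injective_dimension
    (M : ModuleCat.{u} R) (h1 : IsGorensteinInjective M) (h2 : ∃ n, HasInjDimLE M n) :
    Injective M := by
  obtain ⟨I, hI, ⟨e⟩⟩ := h1
  obtain ⟨n, K, ι, hι, hK, hK_zero⟩ := h2
  have hM : CochainComplex.homAcyclic I M :=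
    InjectiveResolution.prop_of_isZero_cocomplex_X _
      (fun J hJ => CochainComplex.homAcyclic_of_exactAt (hI.2.2 J hJ))
      (fun _ hS => CochainComplex.homAcyclic_X₁_of_shortExact hI.1 hS) ⟨K, hK, ι, hι⟩ hK_zero
  have := hI.1 (-1)
  exact CochainComplex.injective_of_homAcyclic_of_iso_cycles (j := -1) (by norm_num) hM e
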